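/- arXiv:2302.05828 — 6 statements merged into one kernel-verified Lean document; each statement's English description precedes it below -/
import Mathlib

section
/- The function f(ρ) = (1/π)(sin(arccos ρ) + (π − arccos ρ)·ρ) satisfies 0 ≤ f'(ρ) ≤ 1 for all ρ ∈ (−1, 1); in particular f is a contraction mapping (1-Lipschitz) on [−1, 1]. -/
/-- The ReLU arc-cosine correlation mapping. -/
noncomputable def arcCosCorr (ρ : ℝ) : ℝ :=
  (1 / Real.pi) * (Real.sin (Real.arccos ρ) + (Real.pi - Real.arccos ρ) * ρ)

/-!
On `(-1, 1)` the derivative of `arcCosCorr` is `(π - arccos ρ) / π`, which lies in `[0, 1]`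
because `arccos` takes values in `[0, π]`. Since `arcCosCorr` is continuous on `[-1, 1]`, the
mean value theorem on the interior turns this derivative bound into the Lipschitz bound.
-/

open Set

theorem Convex.lipschitzOnWith_of_abs_deriv_le {D : Set ℝ} (hD : Convex ℝ D) {f : ℝ → ℝ}
    (hf : ContinuousOn f D) (hf' : DifferentiableOn ℝ f (interior D)) {C : NNReal}
    (hC : ∀ x ∈ interior D, |deriv f x| ≤ C) : LipschitzOnWith C f D := by
  refine LipschitzOnWith.of_dist_le_mul fun x hx y hy => ?_
  wlog hxy : y ≤ x generalizing x y
  · rw [dist_comm, dist_comm x]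
    exact this y hy x hx (le_of_not_ge hxy)
  have upper := hD.image_sub_le_mul_sub_of_deriv_le hf hf'
    (fun z hz => (abs_le.1 (hC z hz)).2) y hy x hx hxy
  have lower := hD.mul_sub_le_image_sub_of_le_deriv hf hf'
    (fun z hz => (abs_le.1 (hC z hz)).1) y hy x hx hxy
  rw [Real.dist_eq, Real.dist_eq, abs_of_nonneg (sub_nonneg.2 hxy), abs_le]
  constructor <;> linarith

namespace arcCosCorr

open Real

theorem continuous : Continuous arcCosCorr := by
  unfold arcCosCorr
  fun_prop

theorem hasDerivAt {ρ : ℝ} (hρ : ρ ∈ Ioo (-1 : ℝ) 1) :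
    HasDerivAt arcCosCorr ((π - arccos ρ) / π) ρ := by
  have harccos := hasDerivAt_arccos hρ.1.ne' hρ.2.ne
  have hsum := (((hasDerivAt_sin _).comp ρ harccos).add
    (((hasDerivAt_const ρ π).sub harccos).mul (hasDerivAt_id ρ))).const_mul (1 / π)
  -- The singular terms `∓ ρ / √(1 - ρ²)` from `sin ∘ arccos` and from `arccos ρ * ρ` cancel.
  refine (hsum : HasDerivAt arcCosCorr _ ρ).congr_deriv ?_
  simp only [cos_arccos hρ.1.le hρ.2.le, id, Pi.sub_apply]
  field_simp
  ring

theorem deriv_eq {ρ : ℝ} (hρ : ρ ∈ Ioo (-1 : ℝ) 1) :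
    deriv arcCosCorr ρ = (π - arccos ρ) / π :=
  (hasDerivAt hρ).deriv

theorem deriv_mem_Icc {ρ : ℝ} (hρ : ρ ∈ Ioo (-1 : ℝ) 1) : deriv arcCosCorr ρ ∈ Icc 0 1 := by
  rw [deriv_eq hρ, mem_Icc, div_le_one pi_pos]
  exact ⟨div_nonneg (sub_nonneg.2 (arccos_le_pi ρ)) pi_pos.le,
    by linarith [arccos_nonneg ρ]⟩

end arcCosCorr

/-- `0 ≤ f'(ρ) ≤ 1` on `(-1,1)`, and `f` is 1-Lipschitz (a contraction
mapping) on `[-1,1]`. -/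
theorem arcCosCorr_deriv_mem_and_lipschitz :
    (∀ ρ ∈ Set.Ioo (-1 : ℝ) 1, 0 ≤ deriv arcCosCorr ρ ∧ deriv arcCosCorr ρ ≤ 1) ∧
    LipschitzOnWith 1 arcCosCorr (Set.Icc (-1 : ℝ) 1) := by
  refine ⟨fun ρ hρ => arcCosCorr.deriv_mem_Icc hρ, ?_⟩
  refine (convex_Icc (-1 : ℝ) 1).lipschitzOnWith_of_abs_deriv_le
    arcCosCorr.continuous.continuousOn ?_ ?_ <;> rw [interior_Icc]
  · exact fun ρ hρ => (arcCosCorr.hasDerivAt hρ).differentiableAt.differentiableWithinAt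
  · intro ρ hρ
    obtain ⟨hlo, hhi⟩ := arcCosCorr.deriv_mem_Icc hρ
    simpa [abs_of_nonneg hlo] using hhi
end

section
/- For the function f(ρ) = (1/π)(sin(arccos ρ) + (π − arccos ρ)·ρ) on [−1, 1], one has f(ρ) ≥ ρ for all ρ ∈ [−1, 1], with equality if and only if ρ = 1. -/
open Real

lemma strictMonoOn_sin_sub_mul_cos :
    StrictMonoOn (fun θ : ℝ => sin θ - θ * cos θ) (Set.Icc 0 π) := by
  apply strictMonoOn_of_deriv_pos (convex_Icc 0 π) (by fun_prop)
  intro θ hθ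
  rw [interior_Icc] at hθ
  have hderiv : HasDerivAt (fun θ : ℝ => sin θ - θ * cos θ) (θ * sin θ) θ :=
    ((hasDerivAt_sin θ).sub ((hasDerivAt_id' θ).mul (hasDerivAt_cos θ))).congr_deriv (by ring)
  rw [hderiv.deriv]
  exact mul_pos hθ.1 (sin_pos_of_pos_of_lt_pi hθ.1 hθ.2)

lemma sin_sub_mul_cos_pos {θ : ℝ} (hθ₀ : 0 < θ) (hθπ : θ ≤ π) : 0 < sin θ - θ * cos θ := by
  simpa using strictMonoOn_sin_sub_mul_cos (Set.left_mem_Icc.2 pi_pos.le) ⟨hθ₀.le, hθπ⟩ hθ₀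

lemma arcCosCorr_sub_self (ρ : ℝ) : arcCosCorr ρ - ρ = (sin (arccos ρ) - arccos ρ * ρ) / π := by
  rw [arcCosCorr]
  field_simp
  ring

lemma arcCosCorr_one : arcCosCorr 1 = 1 := by
  simp [arcCosCorr, pi_ne_zero]

lemma self_lt_arcCosCorr {ρ : ℝ} (hρ₁ : -1 ≤ ρ) (hρ₂ : ρ < 1) : ρ < arcCosCorr ρ := by
  have hpos := sin_sub_mul_cos_pos (arccos_pos.2 hρ₂) (arccos_le_pi ρ)
  rw [cos_arccos hρ₁ hρ₂.le] at hpos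
  rw [← sub_pos, arcCosCorr_sub_self]
  positivity

/-- `f(ρ) ≥ ρ` on `[-1,1]`, with equality iff `ρ = 1`. -/
theorem arcCosCorr_ge_self :
    ∀ ρ ∈ Set.Icc (-1 : ℝ) 1, ρ ≤ arcCosCorr ρ ∧ (arcCosCorr ρ = ρ ↔ ρ = 1) := by
  rintro ρ ⟨hρ₁, hρ₂⟩
  rcases hρ₂.eq_or_lt with rfl | hlt
  · simp [arcCosCorr_one]
  · have hstrict := self_lt_arcCosCorr hρ₁ hlt
    exact ⟨hstrict.le, fun h => absurd h hstrict.ne', fun h => absurd h hlt.ne⟩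
end

section
/- Let x₁, …, x_m be pairwise distinct points on the upper hemisphere S = {x ∈ ℝ^d : ‖x‖₂ = 1, x₁ > 0} with d ≥ 2, and let φ(t) = max(t, 0) be the ReLU function. If c₁, …, c_m ∈ ℝ satisfy Σᵢ cᵢ φ(w · xᵢ) = 0 for all w ∈ ℝ^d, then c₁ = ⋯ = c_m = 0. Consequently, the functions w ↦ φ(w · xᵢ) are linearly independent. -/
/-!
Fix `i`. No `x j` with `j ≠ i` is a multiple of `x i`: the only unit multiples are `± x i`, and
`-x i` has negative first coordinate. Hence there is `w ⟂ x i` with `⟪w, x j⟫ ≠ 0` for all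
`j ≠ i`. Along the line `t ↦ w + t • x i` the `i`-th feature is `max t 0`, which has a kink at
`t = 0`, while every other feature `max (⟪w, x j⟫ + t ⟪x i, x j⟫) 0` is differentiable there.
Hence `c i = 0`.
-/

open RealInnerProductSpace Finset

theorem max_zero_eq_half_add_abs (t : ℝ) : max t 0 = (t + |t|) / 2 := by
  rcases le_total t 0 with h | h
  · rw [max_eq_right h, abs_of_nonpos h]; ring
  · rw [max_eq_left h, abs_of_nonneg h]; ring

theorem differentiableAt_max_zero {s : ℝ} (hs : s ≠ 0) :
    DifferentiableAt ℝ (fun t : ℝ => max t 0) s := by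
  simp_rw [max_zero_eq_half_add_abs]
  exact (differentiableAt_id.add (differentiableAt_abs hs)).div_const 2

theorem not_differentiableAt_max_zero_zero :
    ¬ DifferentiableAt ℝ (fun t : ℝ => max t 0) 0 := by
  intro h
  have habs : (abs : ℝ → ℝ) = fun t => 2 * max t 0 - t := by
    ext t; rw [max_zero_eq_half_add_abs]; ring
  exact not_differentiableAt_abs_zero (habs ▸ (h.const_mul 2).sub differentiableAt_id)

theorem coeff_eq_zero_of_sum_max_zero_eq_zero {ι : Type*} [Fintype ι] [DecidableEq ι]
    (a b c : ι → ℝ) (i : ι) (hai : a i = 0) (hbi : b i = 1) (ha : ∀ j ≠ i, a j ≠ 0)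
    (h : ∀ t, ∑ j, c j * max (a j + t * b j) 0 = 0) : c i = 0 := by
  have hsplit : (fun t => c i * max t 0) =
      fun t => -∑ j ∈ univ.erase i, c j * max (a j + t * b j) 0 := by
    ext t
    have := h t
    rw [← add_sum_erase _ _ (mem_univ i), hai, hbi, zero_add, mul_one] at this
    linarith
  have hdiff : DifferentiableAt ℝ (fun t => c i * max t 0) 0 := by
    rw [hsplit]
    refine (DifferentiableAt.fun_sum fun j hj => ?_).neg
    have hj : a j + 0 * b j ≠ 0 := by simpa using ha j (ne_of_mem_erase hj)
    have hline : DifferentiableAt ℝ (fun t : ℝ => a j + t * b j) 0 := by fun_prop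
    exact ((differentiableAt_max_zero hj).comp 0 hline).const_mul _
  by_contra hc
  refine not_differentiableAt_max_zero_zero ?_
  simpa [inv_mul_cancel_left₀ hc] using hdiff.const_mul (c i)⁻¹

theorem exists_inner_eq_zero_forall_inner_ne_zero {E : Type*} [NormedAddCommGroup E]
    [InnerProductSpace ℝ E] {ι : Type*} [Finite ι] (v : E) (u : ι → E)
    (hu : ∀ j, u j ∉ ℝ ∙ v) : ∃ w, ⟪w, v⟫ = 0 ∧ ∀ j, ⟪w, u j⟫ ≠ 0 := by
  set K := (ℝ ∙ v)ᗮ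
  let f : ι → K →ₗ[ℝ] ℝ := fun j => (innerₛₗ ℝ (u j)).comp K.subtype
  have hf : ∀ j, LinearMap.ker (f j) ≠ ⊤ := by
    intro j htop
    apply hu j
    rw [← Submodule.orthogonal_orthogonal (ℝ ∙ v), Submodule.mem_orthogonal']
    intro y hy
    exact LinearMap.mem_ker.mp (htop ▸ Submodule.mem_top : (⟨y, hy⟩ : K) ∈ LinearMap.ker (f j))
  obtain ⟨w, hw⟩ : ∃ w : K, ∀ j, w ∉ LinearMap.ker (f j) := by
    by_contra! hcov
    obtain ⟨j, hj⟩ := Subspace.exists_eq_top_of_iUnion_eq_univ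
      (Set.eq_univ_of_forall fun w => Set.mem_iUnion.mpr (hcov w))
    exact hf j hj
  refine ⟨w, Submodule.mem_orthogonal_singleton_iff_inner_left.mp w.2, fun j => ?_⟩
  rw [real_inner_comm]
  exact hw j

theorem eq_of_mem_span_singleton_of_norm_eq {E : Type*} [NormedAddCommGroup E]
    [NormedSpace ℝ E] (ℓ : E →ₗ[ℝ] ℝ) {x y : E} (hnorm : ‖x‖ = ‖y‖) (hx : 0 < ℓ x)
    (hy : 0 < ℓ y) (hxy : x ∈ ℝ ∙ y) : x = y := by
  obtain ⟨a, rfl⟩ := Submodule.mem_span_singleton.mp hxy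
  have hy0 : ‖y‖ ≠ 0 := norm_ne_zero_iff.mpr fun h => by simp [h] at hy
  have ha : |a| = 1 := by
    rw [norm_smul, Real.norm_eq_abs] at hnorm
    exact (mul_eq_right₀ hy0).mp hnorm
  have ha_pos : 0 < a := by
    rw [map_smul, smul_eq_mul] at hx
    exact pos_of_mul_pos_left hx hy.le
  rw [abs_of_pos ha_pos] at ha
  rw [ha, one_smul]

/-- linear independence of the ReLU feature maps `w ↦ φ(w ⋅ xᵢ)` for
pairwise distinct points on the open upper hemisphere of the unit sphere in `ℝ^d`,
`d ≥ 2` (universality of the arc-cosine kernel). -/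
theorem relu_features_linearIndependent {d m : ℕ} (hd : 2 ≤ d)
    (x : Fin m → EuclideanSpace ℝ (Fin d))
    (hdist : Function.Injective x)
    (hnorm : ∀ i, ‖x i‖ = 1)
    (hpos : ∀ i, 0 < x i ⟨0, by omega⟩)
    (c : Fin m → ℝ)
    (h : ∀ w : EuclideanSpace ℝ (Fin d),
      ∑ i, c i * max (inner ℝ w (x i) : ℝ) 0 = 0) :
    ∀ i, c i = 0 := by
  intro i
  have hspan : ∀ j : {j // j ≠ i}, x j ∉ ℝ ∙ x i := fun j hj =>
    j.2 <| hdist <| eq_of_mem_span_singleton_of_norm_eq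
      (EuclideanSpace.proj (⟨0, by omega⟩ : Fin d)).toLinearMap
      ((hnorm j).trans (hnorm i).symm) (hpos j) (hpos i) hj
  obtain ⟨w, hwi, hwj⟩ :=
    exists_inner_eq_zero_forall_inner_ne_zero (x i) (fun j : {j // j ≠ i} => x j) hspan
  refine coeff_eq_zero_of_sum_max_zero_eq_zero (fun j => ⟪w, x j⟫) (fun j => ⟪x i, x j⟫) c i hwi
    (by simp [hnorm]) (fun j hj => hwj ⟨j, hj⟩) fun t => ?_
  simpa [inner_add_left, real_inner_smul_left, mul_comm t] using h (w + t • x i)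
end

section
/- Let B be an N×N positive semi-definite matrix and let g(B) = E_{z∼N(0,B)}[φ(z)φ(z)ᵀ] with φ the ReLU. Then g(B)(x, x') ≥ (1/2) B(x, x') entrywise, and the diagonal satisfies g(B)(x, x) = (1/2) B(x, x) for every x. -/
/-- The ReLU covariance mapping `g(B) = E_{z ∼ N(0,B)}[φ(z)φ(z)ᵀ]`, given by the
closed form `g(B)(x,x') = (1/2)√(B(x,x))√(B(x',x')) f(ρ_B(x,x'))` (entries where a
diagonal of `B` vanishes are 0). -/
noncomputable def reluCov {N : ℕ} (B : Matrix (Fin N) (Fin N) ℝ) :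
    Matrix (Fin N) (Fin N) ℝ :=
  Matrix.of fun x x' =>
    (1 / 2) * Real.sqrt (B x x) * Real.sqrt (B x' x') *
      arcCosCorr (B x x' / (Real.sqrt (B x x) * Real.sqrt (B x' x')))

/-!
Writing `ρ = cos θ` with `θ ∈ [0, π]`, one has `π (f(ρ) - ρ) = sin θ - θ cos θ ≥ 0`, so `ρ ≤ f(ρ)`
on `[-1, 1]`. For a positive semidefinite `B` the correlation `B(x,x') / √(B(x,x) B(x',x'))` lies
in `[-1, 1]` (the `2 × 2` principal minor is nonnegative), which gives the entrywise bound; on the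
diagonal the correlation is `1` and `f(1) = 1`.
-/

open Real

lemma Real.mul_cos_le_sin {θ : ℝ} (h0 : 0 ≤ θ) (hπ : θ ≤ π) : θ * cos θ ≤ sin θ := by
  rcases le_or_gt (cos θ) 0 with hc | hc
  · nlinarith [sin_nonneg_of_nonneg_of_le_pi h0 hπ]
  · have hθ : θ < π / 2 := by
      by_contra! h
      exact hc.not_ge (cos_nonpos_of_pi_div_two_le_of_le h (by linarith))
    rw [← le_div_iff₀ hc, ← tan_eq_sin_div_cos]
    exact le_tan h0 hθ

lemma le_arcCosCorr {ρ : ℝ} (h1 : -1 ≤ ρ) (h2 : ρ ≤ 1) : ρ ≤ arcCosCorr ρ := by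
  have hsin := mul_cos_le_sin (arccos_nonneg ρ) (arccos_le_pi ρ)
  rw [cos_arccos h1 h2] at hsin
  have hdiff : arcCosCorr ρ - ρ = (sin (arccos ρ) - arccos ρ * ρ) / π := by
    rw [arcCosCorr]
    field_simp
    ring
  exact sub_nonneg.mp (hdiff ▸ div_nonneg (sub_nonneg.mpr hsin) pi_pos.le)

lemma le_mul_arcCosCorr_div {b s : ℝ} (hb : |b| ≤ s) : b ≤ s * arcCosCorr (b / s) := by
  rcases (abs_nonneg b).trans hb |>.eq_or_lt with rfl | hs
  · simp [abs_nonpos_iff.mp hb]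
  · obtain ⟨h1, h2⟩ := abs_le.mp hb
    calc b = s * (b / s) := by field_simp
      _ ≤ s * arcCosCorr (b / s) := by
        gcongr
        exact le_arcCosCorr ((le_div_iff₀ hs).mpr (by linarith)) ((div_le_one hs).mpr h2)

lemma mul_arcCosCorr_div_self (a : ℝ) : a * arcCosCorr (a / a) = a := by
  rcases eq_or_ne a 0 with rfl | ha
  · simp
  · rw [div_self ha, arcCosCorr_one, mul_one]

lemma Matrix.PosSemidef.abs_apply_le_sqrt_mul_sqrt {n : Type*} [Fintype n]
    {B : Matrix n n ℝ} (hB : B.PosSemidef) (i j : n) :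
    |B i j| ≤ √(B i i) * √(B j j) := by
  have hminor := (hB.submatrix ![i, j]).det_nonneg
  have hsymm : B j i = B i j := by simpa using hB.1.apply i j
  rw [Matrix.det_fin_two] at hminor
  simp only [Matrix.submatrix_apply, Matrix.cons_val_zero, Matrix.cons_val_one, hsymm] at hminor
  rw [← sqrt_mul hB.diag_nonneg]
  exact abs_le_sqrt (by nlinarith)

/-- for PSD `B`, `g(B) ≥ (1/2)B` entrywise and `g(B)(x,x) = (1/2)B(x,x)`. -/
theorem reluCov_entrywise_ge_half {N : ℕ} (B : Matrix (Fin N) (Fin N) ℝ)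
    (hB : B.PosSemidef) :
    (∀ x x', (1 / 2) * B x x' ≤ reluCov B x x') ∧
    (∀ x, reluCov B x x = (1 / 2) * B x x) := by
  have hentry : ∀ x x', reluCov B x x' = (1 / 2) * (√(B x x) * √(B x' x') *
      arcCosCorr (B x x' / (√(B x x) * √(B x' x')))) := fun x x' => by
    simp only [reluCov, Matrix.of_apply, mul_assoc]
  refine ⟨fun x x' => ?_, fun x => ?_⟩
  · rw [hentry]
    exact mul_le_mul_of_nonneg_left
      (le_mul_arcCosCorr_div (hB.abs_apply_le_sqrt_mul_sqrt x x')) (by norm_num)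
  · rw [hentry, mul_self_sqrt hB.diag_nonneg, mul_arcCosCorr_div_self]
end

section
/- Consider the recursion K^{(l+1)} = σ_b² 𝟙 + σ_w² A g(K^{(l)}) Aᵀ where g is the ReLU covariance mapping (trace(g(B)) = (1/2) trace(B) and trace(A g(B) Aᵀ) ≤ (1/2)‖A‖₂² trace(B)), A is symmetric with spectral radius λ > 0, and σ_w² < 2/λ². Then the sequence trace(K^{(l)}) is bounded: trace(K^{(l)}) ≤ N σ_b²/(1 − δ) + trace(K^{(0)}) for all l, where δ = σ_w² λ²/2 < 1. Consequently {K^{(l)}} is a bounded sequence of PSD matrices and admits a convergent subsequence. -/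
/-!
Taking traces in the recursion gives `tr K⁽ˡ⁺¹⁾ ≤ N σ_b² + δ tr K⁽ˡ⁾`, and iterating this affine
inequality with `0 ≤ δ < 1` bounds the traces. The entries of a PSD matrix satisfy
`|M i j| ≤ (M i i + M j j) / 2 ≤ tr M`, so the sequence stays in a compact box of matrices and
therefore has a convergent subsequence.
-/

/-- The spectral (operator 2-) norm of a real square matrix. -/
noncomputable def specNorm {N : ℕ} (A : Matrix (Fin N) (Fin N) ℝ) : ℝ :=
  ‖(Matrix.toEuclideanCLM (𝕜 := ℝ) A :
      EuclideanSpace ℝ (Fin N) →L[ℝ] EuclideanSpace ℝ (Fin N))‖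

open Matrix

theorem le_div_one_sub_add_of_le_add_mul {t : ℕ → ℝ} {b δ : ℝ} (hb : 0 ≤ b) (hδ₀ : 0 ≤ δ)
    (hδ₁ : δ < 1) (ht₀ : 0 ≤ t 0) (hstep : ∀ l, t (l + 1) ≤ b + δ * t l) (l : ℕ) :
    t l ≤ b / (1 - δ) + t 0 := by
  have hδ : 0 < 1 - δ := sub_pos.2 hδ₁
  induction l with
  | zero => simpa using div_nonneg hb hδ.le
  | succ l ih =>
    calc t (l + 1) ≤ b + δ * (b / (1 - δ) + t 0) := (hstep l).trans (by gcongr)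
      _ = b / (1 - δ) + δ * t 0 := by field_simp; ring
      _ ≤ b / (1 - δ) + t 0 := by nlinarith

namespace Matrix.PosSemidef

variable {n : Type*} [Fintype n] [DecidableEq n]

theorem two_mul_abs_apply_le {M : Matrix n n ℝ} (hM : M.PosSemidef) (i j : n) :
    2 * |M i j| ≤ M i i + M j j := by
  have hsymm : M j i = M i j := by simpa using hM.isHermitian.apply i j
  have quadratic_nonneg : ∀ s : ℝ, 0 ≤ M i i + 2 * s * M i j + s ^ 2 * M j j := fun s => by
    have := hM.dotProduct_mulVec_nonneg (Pi.single i 1 + Pi.single j s)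
    simp only [star_trivial, mulVec_add, mulVec_single, MulOpposite.op_one, one_smul,
      op_smul_eq_smul, dotProduct_add, add_dotProduct, single_dotProduct, col_apply, one_mul, hsymm,
      dotProduct_smul, smul_eq_mul] at this
    linarith
  rcases abs_cases (M i j) with ⟨habs, -⟩ | ⟨habs, -⟩ <;> rw [habs]
  · linarith [quadratic_nonneg (-1)]
  · linarith [quadratic_nonneg 1]

theorem abs_apply_le_trace {M : Matrix n n ℝ} (hM : M.PosSemidef) (i j : n) :
    |M i j| ≤ M.trace := by
  have diag_le_trace : ∀ k, M k k ≤ M.trace := fun k =>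
    Finset.single_le_sum (f := M.diag) (fun _ _ => hM.diag_nonneg) (Finset.mem_univ k)
  linarith [hM.two_mul_abs_apply_le i j, diag_le_trace i, diag_le_trace j]

theorem exists_tendsto_subseq_of_trace_le {K : ℕ → Matrix n n ℝ} (hK : ∀ l, (K l).PosSemidef)
    {C : ℝ} (hC : ∀ l, (K l).trace ≤ C) :
    ∃ φ : ℕ → ℕ, StrictMono φ ∧ ∃ Klim : Matrix n n ℝ,
      Filter.Tendsto (K ∘ φ) Filter.atTop (nhds Klim) := by
  have hbox : IsCompact (Set.univ.pi fun _ : n => Set.univ.pi fun _ : n => Set.Icc (-C) C) :=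
    isCompact_univ_pi fun _ => isCompact_univ_pi fun _ => isCompact_Icc
  obtain ⟨Klim, -, φ, hφ, hlim⟩ := hbox.tendsto_subseq (X := n → n → ℝ) (x := K)
    fun l i _ j _ => abs_le.1 (((hK l).abs_apply_le_trace i j).trans (hC l))
  exact ⟨φ, hφ, Klim, hlim⟩

end Matrix.PosSemidef

theorem gcngp_depth_bounded_trace_general {N : ℕ} (A : Matrix (Fin N) (Fin N) ℝ)
    (lam σb2 σw2 : ℝ)
    (hlam : specNorm A = lam)
    (hσw0 : 0 ≤ σw2) (hσw : σw2 < 2 / lam ^ 2) (hσb : 0 ≤ σb2)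
    (K G : ℕ → Matrix (Fin N) (Fin N) ℝ)
    (hK : ∀ l, (K l).PosSemidef)
    (hGA : ∀ l, (A * G l * A.transpose).trace ≤ (1 / 2) * specNorm A ^ 2 * (K l).trace)
    (hrec : ∀ l, K (l + 1) =
      σb2 • (Matrix.of fun _ _ => (1 : ℝ)) + σw2 • (A * G l * A.transpose)) :
    (∀ l, (K l).trace ≤ (N : ℝ) * σb2 / (1 - σw2 * lam ^ 2 / 2) + (K 0).trace) ∧
    ∃ φ : ℕ → ℕ, StrictMono φ ∧
      ∃ Klim : Matrix (Fin N) (Fin N) ℝ,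
        Filter.Tendsto (fun n => K (φ n)) Filter.atTop (nhds Klim) := by
  have hlam2 : 0 < lam ^ 2 := (div_pos_iff_of_pos_left two_pos).1 (hσw0.trans_lt hσw)
  have hδ : σw2 * lam ^ 2 / 2 < 1 := by
    rw [lt_div_iff₀ hlam2] at hσw
    linarith
  have hstep : ∀ l, (K (l + 1)).trace ≤ N * σb2 + σw2 * lam ^ 2 / 2 * (K l).trace := by
    intro l
    have hconj := mul_le_mul_of_nonneg_left (hlam ▸ hGA l) hσw0
    have hones : (of fun _ _ => (1 : ℝ) : Matrix (Fin N) (Fin N) ℝ).trace = N := by simp [trace]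
    rw [hrec l, trace_add, trace_smul, trace_smul, hones, smul_eq_mul, smul_eq_mul]
    linarith
  have hbound := le_div_one_sub_add_of_le_add_mul (t := fun l => (K l).trace)
    (mul_nonneg N.cast_nonneg hσb) (by positivity) hδ (hK 0).trace_nonneg hstep
  exact ⟨hbound, PosSemidef.exists_tendsto_subseq_of_trace_le hK hbound⟩

/-- for the recursion `K^{(l+1)} = σ_b² 𝟙 + σ_w² A g(K^{(l)}) Aᵀ`, with
`A` symmetric with spectral radius `λ > 0`, the ReLU covariance mapping `g` (halving
the trace and satisfying the conjugation trace bound), and `σ_w² < 2/λ²`, the traces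
are bounded by `N σ_b²/(1-δ) + trace K⁰` with `δ = σ_w² λ²/2 < 1`, and the (PSD)
sequence `K^{(l)}` admits a convergent subsequence. -/
theorem gcngp_depth_bounded_trace {N : ℕ} (A : Matrix (Fin N) (Fin N) ℝ)
    (hA : A.IsSymm) (lam σb2 σw2 : ℝ)
    (hlam : specNorm A = lam) (hlampos : 0 < lam)
    (hσw0 : 0 ≤ σw2) (hσw : σw2 < 2 / lam ^ 2) (hσb : 0 ≤ σb2)
    (K G : ℕ → Matrix (Fin N) (Fin N) ℝ)
    (hK : ∀ l, (K l).PosSemidef)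
    (hGtr : ∀ l, (G l).trace = (1 / 2) * (K l).trace)
    (hGA : ∀ l, (A * G l * A.transpose).trace ≤ (1 / 2) * specNorm A ^ 2 * (K l).trace)
    (hrec : ∀ l, K (l + 1) =
      σb2 • (Matrix.of fun _ _ => (1 : ℝ)) + σw2 • (A * G l * A.transpose)) :
    (∀ l, (K l).trace ≤ (N : ℝ) * σb2 / (1 - σw2 * lam ^ 2 / 2) + (K 0).trace) ∧
    ∃ φ : ℕ → ℕ, StrictMono φ ∧
      ∃ Klim : Matrix (Fin N) (Fin N) ℝ,
        Filter.Tendsto (fun n => K (φ n)) Filter.atTop (nhds Klim) :=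
  gcngp_depth_bounded_trace_general A lam σb2 σw2 hlam hσw0 hσw hσb K G hK hGA hrec
end

section
/- Let A be an irreducible nonnegative N×N matrix and let C⁰ be PSD with nonnegative entries. Define the recursion C^{(l)} = g(K^{(l)}) (ReLU covariance mapping, which sends an entrywise nonnegative PSD matrix to an entrywise nonnegative PSD matrix with g(B)(x,x') > 0 whenever B(x,x) > 0 and B(x',x') > 0) and K^{(l+1)} = σ_b² 𝟙 + σ_w² A C^{(l)} Aᵀ with σ_w > 0. If C^{(0)} has strictly positive diagonal, then K^{(2)} has all entries strictly positive. -/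
/-- A nonnegative matrix is irreducible: some positive power connects every pair. -/
def MatIrreducible {N : ℕ} (A : Matrix (Fin N) (Fin N) ℝ) : Prop :=
  ∀ i j, ∃ k : ℕ, 0 < k ∧ 0 < (A ^ k) i j

/-!
Irreducibility of `A` gives every row of `A` a positive entry. Hence `A C Aᵀ` is entrywise
positive as soon as the nonnegative matrix `C` is, and has positive diagonal as soon as `C` has.
The diagonal of `C⁰` makes the diagonal of `K¹` positive, so `g(K¹)` is entrywise positive, and
then so is `K²`.
-/

open Matrix

namespace Matrix

variable {n R : Type*} [Fintype n]

lemma exists_apply_ne_zero_of_pow_succ_apply_ne_zero [DecidableEq n] [Semiring R]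
    {A : Matrix n n R} {k : ℕ} {i j : n} (h : (A ^ (k + 1)) i j ≠ 0) : ∃ m, A i m ≠ 0 := by
  by_contra! hrow
  exact h (by simp [pow_succ', mul_apply, hrow])

section OrderedSemiring

variable [Semiring R] [PartialOrder R] [IsStrictOrderedRing R] {A C : Matrix n n R}

lemma mul_mul_transpose_apply_nonneg (hA : ∀ i j, 0 ≤ A i j) (hC : ∀ i j, 0 ≤ C i j)
    (i j : n) : 0 ≤ (A * C * Aᵀ) i j :=
  Finset.sum_nonneg fun _ _ =>
    mul_nonneg (Finset.sum_nonneg fun _ _ => mul_nonneg (hA _ _) (hC _ _)) (hA _ _)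

lemma mul_mul_transpose_apply_pos (hA : ∀ i j, 0 ≤ A i j) (hC : ∀ i j, 0 ≤ C i j)
    {i j m m' : n} (him : 0 < A i m) (hjm' : 0 < A j m') (hmm' : 0 < C m m') :
    0 < (A * C * Aᵀ) i j := by
  have hAC : 0 < (A * C) i m' :=
    Finset.sum_pos' (fun _ _ => mul_nonneg (hA _ _) (hC _ _))
      ⟨m, Finset.mem_univ m, mul_pos him hmm'⟩
  exact Finset.sum_pos' (fun _ _ => mul_nonneg
    (Finset.sum_nonneg fun _ _ => mul_nonneg (hA _ _) (hC _ _)) (hA _ _))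
    ⟨m', Finset.mem_univ m', mul_pos hAC hjm'⟩

end OrderedSemiring

end Matrix

lemma MatIrreducible.exists_pos_apply {N : ℕ} {A : Matrix (Fin N) (Fin N) ℝ}
    (hA : ∀ i j, 0 ≤ A i j) (hirr : MatIrreducible A) (i : Fin N) : ∃ m, 0 < A i m := by
  obtain ⟨k, hk, hpos⟩ := hirr i i
  obtain ⟨k, rfl⟩ := Nat.exists_eq_succ_of_ne_zero hk.ne'
  obtain ⟨m, hm⟩ := exists_apply_ne_zero_of_pow_succ_apply_ne_zero hpos.ne'
  exact ⟨m, (hA i m).lt_of_ne' hm⟩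

def gcnKernel {n R : Type*} [Fintype n] [Semiring R] (σb2 σw2 : R) (A C : Matrix n n R) :
    Matrix n n R :=
  σb2 • (of fun _ _ => (1 : R)) + σw2 • (A * C * Aᵀ)

section gcnKernel

variable {n : Type*} [Fintype n] {σb2 σw2 : ℝ} {A C : Matrix n n ℝ}

@[simp]
lemma gcnKernel_apply (i j : n) :
    gcnKernel σb2 σw2 A C i j = σb2 + σw2 * (A * C * Aᵀ) i j := by
  simp [gcnKernel]

lemma gcnKernel_posSemidef (hσb : 0 ≤ σb2) (hσw : 0 ≤ σw2) (hC : C.PosSemidef) :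
    (gcnKernel σb2 σw2 A C).PosSemidef := by
  have hones : (of fun _ _ => (1 : ℝ) : Matrix n n ℝ).PosSemidef := by
    simpa [vecMulVec] using posSemidef_vecMulVec_self_star (1 : n → ℝ)
  have hACA : (A * C * Aᵀ).PosSemidef := by
    simpa using hC.mul_mul_conjTranspose_same A
  exact (hones.smul hσb).add (hACA.smul hσw)

lemma gcnKernel_apply_nonneg (hσb : 0 ≤ σb2) (hσw : 0 ≤ σw2) (hA : ∀ i j, 0 ≤ A i j)
    (hC : ∀ i j, 0 ≤ C i j) (i j : n) : 0 ≤ gcnKernel σb2 σw2 A C i j := by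
  rw [gcnKernel_apply]
  exact add_nonneg hσb (mul_nonneg hσw (mul_mul_transpose_apply_nonneg hA hC i j))

lemma gcnKernel_apply_pos (hσb : 0 ≤ σb2) (hσw : 0 < σw2) (hA : ∀ i j, 0 ≤ A i j)
    (hC : ∀ i j, 0 ≤ C i j) {i j m m' : n} (him : 0 < A i m) (hjm' : 0 < A j m')
    (hmm' : 0 < C m m') : 0 < gcnKernel σb2 σw2 A C i j := by
  rw [gcnKernel_apply]
  exact add_pos_of_nonneg_of_pos hσb
    (mul_pos hσw (mul_mul_transpose_apply_pos hA hC him hjm' hmm'))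

end gcnKernel

/-- for irreducible nonnegative `A`, `C⁰` PSD with nonnegative entries
and strictly positive diagonal, and the ReLU covariance mapping `g` (preserving
entrywise-nonnegative PSD matrices, with `g(B)(x,x') > 0` whenever
`B(x,x), B(x',x') > 0`), the second iterate `K² = σ_b² 𝟙 + σ_w² A g(K¹) Aᵀ` of the
GCN covariance recursion has all entries strictly positive. -/
theorem gcngp_K2_entrywise_pos {N : ℕ} (A C0 : Matrix (Fin N) (Fin N) ℝ)
    (hAnn : ∀ i j, 0 ≤ A i j) (hAirr : MatIrreducible A)
    (hC0 : C0.PosSemidef) (hC0nn : ∀ i j, 0 ≤ C0 i j) (hC0d : ∀ i, 0 < C0 i i)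
    (σb2 σw2 : ℝ) (hσb : 0 ≤ σb2) (hσw : 0 < σw2)
    (g : Matrix (Fin N) (Fin N) ℝ → Matrix (Fin N) (Fin N) ℝ)
    (hg : ∀ B : Matrix (Fin N) (Fin N) ℝ, B.PosSemidef → (∀ i j, 0 ≤ B i j) →
      (g B).PosSemidef ∧ (∀ i j, 0 ≤ g B i j) ∧
      ∀ i j, 0 < B i i → 0 < B j j → 0 < g B i j)
    (K1 K2 : Matrix (Fin N) (Fin N) ℝ)
    (hK1 : K1 = σb2 • (Matrix.of fun _ _ => (1 : ℝ)) + σw2 • (A * C0 * A.transpose))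
    (hK2 : K2 = σb2 • (Matrix.of fun _ _ => (1 : ℝ)) + σw2 • (A * g K1 * A.transpose)) :
    ∀ i j, 0 < K2 i j := by
  have hrow := hAirr.exists_pos_apply hAnn
  have hK1d (i : Fin N) : 0 < K1 i i := by
    obtain ⟨m, hm⟩ := hrow i
    exact hK1 ▸ gcnKernel_apply_pos hσb hσw hAnn hC0nn hm hm (hC0d m)
  obtain ⟨-, hgnn, hgpos⟩ := hg K1 (hK1 ▸ gcnKernel_posSemidef hσb hσw.le hC0)
    (hK1 ▸ gcnKernel_apply_nonneg hσb hσw.le hAnn hC0nn)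
  intro i j
  obtain ⟨m, hm⟩ := hrow i
  obtain ⟨m', hm'⟩ := hrow j
  exact hK2 ▸ gcnKernel_apply_pos hσb hσw hAnn hgnn hm hm' (hgpos m m' (hK1d m) (hK1d m'))
end
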